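/- arXiv:1711.10606 — 4 statements merged into one kernel-verified Lean document; each statement's English description precedes it below -/
import Mathlib

section
/- The negativity of a maximally correlated state ρ̃ = Σ_{i,j} β_{ij} |ii⟩⟨jj| equals Σ_{i<j} |β_{ij}|, which is half the ℓ₁-norm of coherence of the associated single-system state ρ = Σ_{i,j} β_{ij} |i⟩⟨j|. -/
open Matrix
open scoped ComplexOrder

variable {d : ℕ}

/-- The maximally correlated state `ρ̃ = ∑ᵢⱼ βᵢⱼ |ii⟩⟨jj|`. -/
noncomputable def mcState (β : Fin d → Fin d → ℂ) :
    Matrix (Fin d × Fin d) (Fin d × Fin d) ℂ :=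
  Matrix.of fun p q => if p.1 = p.2 ∧ q.1 = q.2 then β p.1 q.1 else 0

/-- Partial transpose on the second tensor factor: `(|ab⟩⟨cd|)^Γ = |ad⟩⟨cb|`. -/
noncomputable def ptransB (X : Matrix (Fin d × Fin d) (Fin d × Fin d) ℂ) :
    Matrix (Fin d × Fin d) (Fin d × Fin d) ℂ :=
  Matrix.of fun p q => X (p.1, q.2) (q.1, p.2)

/-- Trace norm `‖A‖₁ = Tr √(A†A)`. -/
noncomputable def traceNorm {ι : Type*} [Fintype ι] [DecidableEq ι]
    (A : Matrix ι ι ℂ) : ℝ :=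
  (((Matrix.posSemidef_conjTranspose_mul_self A).1.eigenvectorUnitary *
      diagonal (((↑) : ℝ → ℂ) ∘ (√·) ∘ (Matrix.posSemidef_conjTranspose_mul_self A).1.eigenvalues) *
      (star (Matrix.posSemidef_conjTranspose_mul_self A).1.eigenvectorUnitary : Matrix ι ι ℂ)).trace).re

lemma Y_entry (β : Fin d → Fin d → ℂ) (r p : Fin d × Fin d) :
    ptransB (mcState β) r p = if r = (p.2, p.1) then β p.2 p.1 else 0 := by
  rcases r with ⟨r1, r2⟩; rcases p with ⟨p1, p2⟩
  simp only [ptransB, mcState, of_apply, Prod.mk.injEq]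
  by_cases h1 : r1 = p2 <;> by_cases h2 : r2 = p1 <;> simp_all [eq_comm]

lemma YtY (β : Fin d → Fin d → ℂ) :
    (ptransB (mcState β))ᴴ * (ptransB (mcState β))
      = diagonal (fun p : Fin d × Fin d => ((‖β p.2 p.1‖ : ℂ))^2) := by
  ext p q
  rw [mul_apply]
  simp only [conjTranspose_apply, Y_entry, apply_ite star, star_zero]
  rw [Finset.sum_eq_single ((p.2, p.1) : Fin d × Fin d)]
  · by_cases h : p = q
    · subst h
      simp only [if_pos rfl, diagonal_apply_eq, RCLike.star_def]
      exact_mod_cast RCLike.conj_mul (β p.2 p.1)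
    · have h2 : ¬ ((p.2, p.1) : Fin d × Fin d) = (q.2, q.1) := by
        simp [Prod.ext_iff]; intro h1 h2; exact absurd (Prod.ext h2 h1) h
      simp [h2, diagonal_apply_ne _ h]
  · intro r _ hr
    simp [hr]
  · simp

/-- Negativity of a maximally correlated state equals `∑_{i<j} |βᵢⱼ|`, which is
half the ℓ₁-norm of coherence of the associated single-system state. -/
theorem negativity_mcState (β : Fin d → Fin d → ℂ)
    (hPSD : (mcState β).PosSemidef) (htr : (mcState β).trace = 1) :
    ((traceNorm (ptransB (mcState β)) - 1) / 2
        = ∑ i : Fin d, ∑ j : Fin d, (if i < j then ‖β i j‖ else 0)) ∧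
    ((∑ i : Fin d, ∑ j : Fin d, (if i < j then ‖β i j‖ else 0))
        = (1 / 2) * ∑ i : Fin d, ∑ j : Fin d, (if i ≠ j then ‖β i j‖ else 0)) := by
  -- Hermiticity of β
  have hstar : ∀ i j, star (β i j) = β j i := by
    intro i j
    have := congrFun (congrFun hPSD.1 (j, j)) (i, i)
    simpa [conjTranspose_apply, mcState] using this
  have hsym : ∀ i j, ‖β j i‖ = ‖β i j‖ := by
    intro i j; rw [← hstar i j, norm_star]
  -- diagonal entries nonneg
  have hdiag : ∀ i, 0 ≤ β i i := by
    intro i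
    have := hPSD.diag_nonneg (i := (i, i))
    simpa [mcState, dotProduct, mulVec, Pi.single_apply, Fintype.sum_prod_type,
      Finset.sum_ite_eq, Prod.mk.injEq, ite_and] using this
  -- trace
  have htrace : ∑ i, β i i = 1 := by
    rw [← htr]
    simp [trace, diag, mcState, Fintype.sum_prod_type, Finset.sum_ite_eq]
  -- sqrt of Y†Y
  have hpsd : (diagonal fun p : Fin d × Fin d => ((‖β p.2 p.1‖ : ℂ))).PosSemidef :=
    posSemidef_diagonal_iff.mpr fun p => Complex.zero_le_real.mpr (norm_nonneg _)
  have hsqrt : ((posSemidef_conjTranspose_mul_self (ptransB (mcState β))).1.eigenvectorUnitary *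
      diagonal (((↑) : ℝ → ℂ) ∘ (√·) ∘
        (posSemidef_conjTranspose_mul_self (ptransB (mcState β))).1.eigenvalues) *
      (star (posSemidef_conjTranspose_mul_self (ptransB (mcState β))).1.eigenvectorUnitary :
        Matrix (Fin d × Fin d) (Fin d × Fin d) ℂ))
      = diagonal (fun p : Fin d × Fin d => (‖β p.2 p.1‖ : ℂ)) := by
    open scoped MatrixOrder in
    have hA := posSemidef_conjTranspose_mul_self (ptransB (mcState β))
    open scoped MatrixOrder in
    have e1 : ((posSemidef_conjTranspose_mul_self (ptransB (mcState β))).1.eigenvectorUnitary *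
        diagonal (((↑) : ℝ → ℂ) ∘ (√·) ∘
          (posSemidef_conjTranspose_mul_self (ptransB (mcState β))).1.eigenvalues) *
        (star (posSemidef_conjTranspose_mul_self (ptransB (mcState β))).1.eigenvectorUnitary :
          Matrix (Fin d × Fin d) (Fin d × Fin d) ℂ))
        = CFC.sqrt ((ptransB (mcState β))ᴴ * (ptransB (mcState β))) := by
      rw [CFC.sqrt_eq_real_sqrt _ (nonneg_iff_posSemidef.mpr hA), cfcₙ_eq_cfc, hA.1.cfc_eq]
      simp only [IsHermitian.cfc, Unitary.conjStarAlgAut_apply]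
      rfl
    open scoped MatrixOrder in
    rw [e1]
    open scoped MatrixOrder in
    refine CFC.sqrt_unique ?_ (nonneg_iff_posSemidef.mpr hpsd)
    rw [diagonal_mul_diagonal, YtY]
    simp [sq]
  -- trace norm value
  have htn : traceNorm (ptransB (mcState β)) = ∑ i, ∑ j, ‖β i j‖ := by
    rw [traceNorm, hsqrt, trace_diagonal]
    rw [Fintype.sum_prod_type]
    simp only [Complex.re_sum, Complex.ofReal_re]
    rw [Finset.sum_comm]
  -- split the full sum
  have hdiagnorm : ∀ i, ‖β i i‖ = (β i i).re := by
    intro i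
    obtain ⟨hre, him⟩ := Complex.nonneg_iff.mp (hdiag i)
    have : β i i = ((β i i).re : ℂ) := Complex.ext rfl him.symm
    rw [this]
    simp [Real.norm_eq_abs, abs_of_nonneg hre]
  have hdiagsum : ∑ i, ‖β i i‖ = 1 := by
    have : (∑ i, β i i).re = 1 := by rw [htrace]; simp
    rw [← this, Complex.re_sum]
    exact Finset.sum_congr rfl fun i _ => hdiagnorm i
  have hsplit : ∑ i, ∑ j, ‖β i j‖
      = 1 + ∑ i : Fin d, ∑ j : Fin d, (if i ≠ j then ‖β i j‖ else 0) := by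
    rw [← hdiagsum, ← Finset.sum_add_distrib]
    refine Finset.sum_congr rfl fun i _ => ?_
    have hterm : ∑ j, ‖β i j‖
        = ∑ j, ((if i = j then ‖β i i‖ else 0) + (if i ≠ j then ‖β i j‖ else 0)) :=
      Finset.sum_congr rfl fun j _ => by by_cases h : i = j <;> simp [h]
    rw [hterm, Finset.sum_add_distrib, Finset.sum_ite_eq]
    simp
  have hkey : ∑ i : Fin d, ∑ j : Fin d, (if i ≠ j then ‖β i j‖ else 0)
      = 2 * ∑ i : Fin d, ∑ j : Fin d, (if i < j then ‖β i j‖ else 0) := by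
    have h1 : ∑ i : Fin d, ∑ j : Fin d, (if i ≠ j then ‖β i j‖ else 0)
        = (∑ i : Fin d, ∑ j : Fin d, (if i < j then ‖β i j‖ else 0))
          + ∑ i : Fin d, ∑ j : Fin d, (if j < i then ‖β i j‖ else 0) := by
      rw [← Finset.sum_add_distrib]
      refine Finset.sum_congr rfl fun i _ => ?_
      rw [← Finset.sum_add_distrib]
      refine Finset.sum_congr rfl fun j _ => ?_
      rcases lt_trichotomy i j with h | h | h
      · simp [h, ne_of_lt h, asymm h]
      · subst h; simp
      · simp [h, ne_of_gt h, asymm h]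
    have h2 : ∑ i : Fin d, ∑ j : Fin d, (if j < i then ‖β i j‖ else 0)
        = ∑ i : Fin d, ∑ j : Fin d, (if i < j then ‖β i j‖ else 0) := by
      rw [Finset.sum_comm]
      exact Finset.sum_congr rfl fun i _ => Finset.sum_congr rfl fun j _ => by
        by_cases h : i < j <;> simp [h, hsym]
    rw [h1, h2]; ring
  constructor
  · rw [htn, hsplit, hkey]; ring
  · rw [hkey]; ring
end

section
/- Among bipartite states of the block form Ω = Σ_{i≠j} α_{ij} |a_i b_j⟩⟨a_i b_j| + Σ_{i,j} β_{ij} |a_i b_i⟩⟨a_j b_j| (with all α_{ij} ≥ 0 and the MC block positive semidefinite), the only pure states that are entangled are maximally correlated pure states, i.e., states of the form Σ_i β_i |a_i b_i⟩ with at least two nonzero β_i. More precisely, if Ω is a rank-one projection |φ⟩⟨φ| and |φ⟩ is not a product state, then |φ⟩ = Σ_i β_i |a_i b_i⟩ for some coefficients β_i. -/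
open Matrix
open scoped ComplexOrder

variable {d : ℕ}

/-- Outer product `|v⟩⟨w|`. -/
noncomputable def outer {ι : Type*} (v w : ι → ℂ) : Matrix ι ι ℂ :=
  Matrix.vecMulVec v (star w)

/-- The product vector `|aᵢ bⱼ⟩`. -/
noncomputable def abVec (a b : Fin d → Fin d → ℂ) (i j : Fin d) :
    Fin d × Fin d → ℂ :=
  fun p => a i p.1 * b j p.2

lemma outer_mulVec {ι : Type*} [Fintype ι] (v w x : ι → ℂ) :
    outer v w *ᵥ x = (star w ⬝ᵥ x) • v := by
  funext i
  simp only [outer, mulVec, dotProduct, vecMulVec_apply, Pi.smul_apply, Pi.star_apply,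
    smul_eq_mul, Finset.sum_mul]
  exact Finset.sum_congr rfl fun j _ => by ring

/-- quadratic form as an AddMonoidHom -/
noncomputable def quadHom {ι : Type*} [Fintype ι] (x : ι → ℂ) : Matrix ι ι ℂ →+ ℂ where
  toFun M := star x ⬝ᵥ (M *ᵥ x)
  map_zero' := by simp
  map_add' M N := by simp [add_mulVec, dotProduct_add]

@[simp] lemma quadHom_apply {ι : Type*} [Fintype ι] (x : ι → ℂ) (M : Matrix ι ι ℂ) :
    quadHom x M = star x ⬝ᵥ (M *ᵥ x) := rfl

lemma quadHom_smul {ι : Type*} [Fintype ι] (x : ι → ℂ) (c : ℂ) (M : Matrix ι ι ℂ) :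
    quadHom x (c • M) = c * quadHom x M := by
  simp [smul_mulVec, dotProduct_smul]

lemma quadHom_outer {ι : Type*} [Fintype ι] (x v w : ι → ℂ) :
    quadHom x (outer v w) = (star x ⬝ᵥ v) * (star w ⬝ᵥ x) := by
  simp [outer_mulVec, dotProduct_smul, mul_comm]

lemma sum_mulVec' {ι n m : Type*} [Fintype n] (s : Finset ι) (M : ι → Matrix m n ℂ)
    (v : n → ℂ) : (∑ i ∈ s, M i) *ᵥ v = ∑ i ∈ s, M i *ᵥ v :=
  map_sum (Matrix.mulVec.addMonoidHomLeft v) M s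

lemma dot_ab (a b : Fin d → Fin d → ℂ) (i j k l : Fin d) :
    star (abVec a b i j) ⬝ᵥ abVec a b k l = (star (a i) ⬝ᵥ a k) * (star (b j) ⬝ᵥ b l) := by
  simp only [dotProduct, abVec, Pi.star_apply, Finset.sum_mul_sum]
  rw [Fintype.sum_prod_type]
  exact Finset.sum_congr rfl fun p _ => Finset.sum_congr rfl fun q _ => by simp [star_mul']; ring

/-- Among states of the block form
`Ω = ∑_{i≠j} αᵢⱼ |aᵢbⱼ⟩⟨aᵢbⱼ| + ∑_{i,j} βᵢⱼ |aᵢbᵢ⟩⟨aⱼbⱼ|`, any pure state that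
is not a product state must be a maximally correlated pure state
`∑ᵢ βᵢ |aᵢbᵢ⟩`. -/
theorem pure_block_state_entangled_is_MC
    (a b : Fin d → Fin d → ℂ)
    (ha : ∀ i j, star (a i) ⬝ᵥ a j = if i = j then 1 else 0)
    (hb : ∀ i j, star (b i) ⬝ᵥ b j = if i = j then 1 else 0)
    (α : Fin d → Fin d → ℝ) (hα : ∀ i j, 0 ≤ α i j)
    (β : Fin d → Fin d → ℂ) (hβ : (Matrix.of β).PosSemidef)
    (φ : Fin d × Fin d → ℂ) (hunit : star φ ⬝ᵥ φ = 1)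
    (hΩ : (∑ i : Fin d, ∑ j : Fin d,
            if i ≠ j then (α i j : ℂ) • outer (abVec a b i j) (abVec a b i j) else 0) +
          (∑ i : Fin d, ∑ j : Fin d, β i j • outer (abVec a b i i) (abVec a b j j))
        = outer φ φ)
    (hent : ¬ ∃ (u v : Fin d → ℂ), φ = fun p => u p.1 * v p.2) :
    ∃ c : Fin d → ℂ, φ = fun p => ∑ i : Fin d, c i * abVec a b i i p := by
  classical
  have habn : ∀ i j : Fin d, star (abVec a b i j) ⬝ᵥ abVec a b i j = 1 := by
    intro i j; rw [dot_ab, ha, hb]; simp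
  -- Step 1 : all off-diagonal α vanish
  have hα0 : ∀ i j : Fin d, i ≠ j → (α i j : ℂ) = 0 := by
    intro i j hij
    by_contra hne
    apply hent
    set s : ℂ := star φ ⬝ᵥ abVec a b i j with hs
    set x : Fin d × Fin d → ℂ := abVec a b i j - s • φ with hx
    have hφx : star φ ⬝ᵥ x = 0 := by
      simp [hx, dotProduct_sub, dotProduct_smul, hunit, hs]
    have hq := congrArg (quadHom x) hΩ
    simp only [map_add, map_sum, apply_ite (quadHom x), map_zero, quadHom_smul,
      quadHom_outer] at hq
    rw [hφx, mul_zero] at hq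
    -- nonnegativity of each piece
    have hterm : ∀ k l : Fin d,
        0 ≤ (if k ≠ l then (α k l : ℂ) *
              ((star x ⬝ᵥ abVec a b k l) * (star (abVec a b k l) ⬝ᵥ x)) else 0) := by
      intro k l
      split_ifs with h
      · refine mul_nonneg (Complex.zero_le_real.mpr (hα k l)) ?_
        rw [star_dotProduct]
        exact star_mul_self_nonneg _
      · exact le_refl 0
    have hSnn : 0 ≤ ∑ k : Fin d, ∑ l : Fin d,
        (if k ≠ l then (α k l : ℂ) *
          ((star x ⬝ᵥ abVec a b k l) * (star (abVec a b k l) ⬝ᵥ x)) else 0) :=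
      Finset.sum_nonneg fun k _ => Finset.sum_nonneg fun l _ => hterm k l
    have hTnn : 0 ≤ ∑ k : Fin d, ∑ l : Fin d,
        β k l * ((star x ⬝ᵥ abVec a b k k) * (star (abVec a b l l) ⬝ᵥ x)) := by
      have h2 := hβ.dotProduct_mulVec_nonneg (fun k => star (abVec a b k k) ⬝ᵥ x)
      have hw : star (fun k => star (abVec a b k k) ⬝ᵥ x) =
          fun k => star x ⬝ᵥ abVec a b k k := by
        funext k
        simp only [Pi.star_apply]
        exact (star_dotProduct x _).symm
      have heq : star (fun k => star (abVec a b k k) ⬝ᵥ x) ⬝ᵥ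
            ((Matrix.of β) *ᵥ (fun k => star (abVec a b k k) ⬝ᵥ x)) =
          ∑ k : Fin d, ∑ l : Fin d,
            β k l * ((star x ⬝ᵥ abVec a b k k) * (star (abVec a b l l) ⬝ᵥ x)) := by
        rw [hw]
        simp only [dotProduct, mulVec, of_apply, Finset.mul_sum]
        refine Finset.sum_congr rfl fun k _ => Finset.sum_congr rfl fun l _ => ?_
        refine Finset.sum_congr rfl fun p _ => by ring
      rw [heq] at h2
      exact h2
    -- both pieces are zero
    have hS0 : (∑ k : Fin d, ∑ l : Fin d,
        (if k ≠ l then (α k l : ℂ) *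
          ((star x ⬝ᵥ abVec a b k l) * (star (abVec a b k l) ⬝ᵥ x)) else 0)) = 0 := by
      have hle : (∑ k : Fin d, ∑ l : Fin d,
          (if k ≠ l then (α k l : ℂ) *
            ((star x ⬝ᵥ abVec a b k l) * (star (abVec a b k l) ⬝ᵥ x)) else 0)) ≤ 0 := by
        calc _ ≤ _ + _ := le_add_of_nonneg_right hTnn
        _ = 0 := hq
      exact le_antisymm hle hSnn
    have hz : (α i j : ℂ) * ((star x ⬝ᵥ abVec a b i j) * (star (abVec a b i j) ⬝ᵥ x)) = 0 := by
      have h1 := (Finset.sum_eq_zero_iff_of_nonneg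
        (fun k _ => Finset.sum_nonneg fun l _ => hterm k l)).mp hS0 i (Finset.mem_univ i)
      have h2 := (Finset.sum_eq_zero_iff_of_nonneg
        (fun l _ => hterm i l)).mp h1 j (Finset.mem_univ j)
      rwa [if_pos hij] at h2
    have hz0 : star (abVec a b i j) ⬝ᵥ x = 0 := by
      rcases mul_eq_zero.mp hz with h | h
      · exact absurd h hne
      · rw [star_dotProduct] at h
        rcases mul_eq_zero.mp h with h' | h'
        · exact star_eq_zero.mp h'
        · exact h'
    -- compute the dot product
    have hsbar : star (abVec a b i j) ⬝ᵥ φ = star s := by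
      rw [hs, star_dotProduct]
    have hz' : star (abVec a b i j) ⬝ᵥ x = 1 - s * star s := by
      rw [hx, dotProduct_sub, dotProduct_smul, hsbar, habn]
      simp [smul_eq_mul]
    have hss : s * star s = 1 := by
      have := hz'.symm.trans hz0
      linear_combination -this
    have hsne : s ≠ 0 := by
      intro h
      rw [h] at hss
      simp at hss
    have hxx : star x ⬝ᵥ x = 0 := by
      rw [hx, star_sub, star_smul, sub_dotProduct, smul_dotProduct, hz0, hφx]
      simp
    have hx0 : x = 0 := dotProduct_star_self_eq_zero.mp hxx
    refine ⟨fun k => s⁻¹ * a i k, b j, ?_⟩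
    funext p
    have hp := congrFun hx0 p
    simp only [hx, Pi.sub_apply, Pi.smul_apply, Pi.zero_apply, smul_eq_mul, abVec,
      sub_eq_zero] at hp
    have hφp : φ p = s⁻¹ * (a i p.1 * b j p.2) := by
      rw [hp, inv_mul_cancel_left₀ hsne]
    simp only [hφp]
    ring
  -- Step 2 : the state lies in the maximally correlated subspace
  have hzero : (∑ i : Fin d, ∑ j : Fin d,
      if i ≠ j then (α i j : ℂ) • outer (abVec a b i j) (abVec a b i j) else 0) = 0 := by
    refine Finset.sum_eq_zero fun i _ => Finset.sum_eq_zero fun j _ => ?_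
    split_ifs with h
    · rw [hα0 i j h, zero_smul]
    · rfl
  rw [hzero, zero_add] at hΩ
  refine ⟨fun i => ∑ j : Fin d, β i j * (star (abVec a b j j) ⬝ᵥ φ), ?_⟩
  have hφ := congrArg (fun M => M *ᵥ φ) hΩ
  simp only [sum_mulVec', smul_mulVec, outer_mulVec, hunit, one_smul] at hφ
  funext p
  conv_lhs => rw [← hφ]
  simp only [Finset.sum_apply, Pi.smul_apply, smul_eq_mul, Finset.sum_mul]
  refine Finset.sum_congr rfl fun i _ => Finset.sum_congr rfl fun j _ => by ring
end

section
/- Vector version of the Gentle Measurement argument: if |φ̂⟩ is a unit vector, W is a unitary, X is an operator with 0 ≤ X ≤ I, and ⟨φ| W† √X |φ̂⟩ > 1 − ε (real part) for a unit vector |φ⟩, and ‖|φ̂⟩ − √X|φ̂⟩‖ ≤ δ, then ‖W|φ⟩ − |φ̂⟩‖ ≤ √(2ε) + δ; in particular (W|φ⟩)|φ⟩ approximately equals |φ̂⟩ up to O(√ε + δ) in norm. -/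
open Matrix
open scoped ComplexOrder

/-- The square root of a positive semidefinite matrix (removed from Mathlib; old definition). -/
noncomputable def Matrix.PosSemidef.sqrt {𝕜 : Type*} [RCLike 𝕜] {n : Type*} [Fintype n]
    [DecidableEq n] {A : Matrix n n 𝕜} (hA : A.PosSemidef) : Matrix n n 𝕜 :=
  hA.1.eigenvectorUnitary.1 * diagonal ((↑) ∘ Real.sqrt ∘ hA.1.eigenvalues) *
    (star hA.1.eigenvectorUnitary : Matrix n n 𝕜)

lemma psd_sqrt_isHermitian {n : Type*} [Fintype n] [DecidableEq n] {A : Matrix n n ℂ}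
    (hA : A.PosSemidef) : hA.sqrt.IsHermitian := by
  simp [IsHermitian, PosSemidef.sqrt, conjTranspose_mul, star_eq_conjTranspose,
    diagonal_conjTranspose, mul_assoc]
  congr 3
  funext i
  simp

lemma psd_sqrt_mul_self {n : Type*} [Fintype n] [DecidableEq n] {A : Matrix n n ℂ}
    (hA : A.PosSemidef) : hA.sqrt * hA.sqrt = A := by
  have hU : (star hA.1.eigenvectorUnitary : Matrix n n ℂ) * hA.1.eigenvectorUnitary.1 = 1 :=
    Unitary.coe_star_mul_self _
  conv_rhs => rw [hA.1.spectral_theorem, Unitary.conjStarAlgAut_apply]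
  simp only [Matrix.PosSemidef.sqrt]
  rw [show ∀ a b c d e f : Matrix n n ℂ, a*b*c*(d*e*f) = a*b*(c*d)*e*f by
    intros; simp [mul_assoc]]
  rw [hU, mul_one, mul_assoc (hA.1.eigenvectorUnitary.1), diagonal_mul_diagonal]
  congr 3
  funext i
  simp only [Function.comp_apply]
  rw [← RCLike.ofReal_mul, Real.mul_self_sqrt (hA.eigenvalues_nonneg i)]

/-- Vector version of the Gentle Measurement argument: if `φ, φ̂` are unit vectors,
`W` unitary, `0 ≤ X ≤ I`, `Re⟨φ̂|√X W|φ⟩ ≥ 1 − ε` and `‖φ̂ − √X φ̂‖ ≤ δ`,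
then `‖Wφ − φ̂‖ ≤ √(2ε) + δ`. -/
theorem gentle_measurement_vector {n : ℕ}
    (W X : Matrix (Fin n) (Fin n) ℂ)
    (hW : W ∈ Matrix.unitaryGroup (Fin n) ℂ)
    (hX : X.PosSemidef) (hXle : (1 - X).PosSemidef)
    (φ φhat : EuclideanSpace ℂ (Fin n))
    (hφ : ‖φ‖ = 1) (hφhat : ‖φhat‖ = 1)
    (ε δ : ℝ) (hε : 0 ≤ ε) (hδ : 0 ≤ δ)
    (hoverlap : 1 - ε ≤
      (inner ℂ φhat (Matrix.toEuclideanLin hX.sqrt (Matrix.toEuclideanLin W φ)) : ℂ).re)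
    (hgentle : ‖φhat - Matrix.toEuclideanLin hX.sqrt φhat‖ ≤ δ) :
    ‖Matrix.toEuclideanLin W φ - φhat‖ ≤ Real.sqrt (2 * ε) + δ := by
  set S := hX.sqrt with hSdef
  set ψ : EuclideanSpace ℂ (Fin n) := Matrix.toEuclideanLin W φ with hψdef
  have hSherm : S.IsHermitian := psd_sqrt_isHermitian hX
  -- adjoint moves
  have hadj : ∀ (M : Matrix (Fin n) (Fin n) ℂ) (x y : EuclideanSpace ℂ (Fin n)),
      (inner ℂ (Matrix.toEuclideanLin M x) y : ℂ) =
        inner ℂ x (Matrix.toEuclideanLin Mᴴ y) := by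
    intro M x y
    rw [Matrix.toEuclideanLin_conjTranspose_eq_adjoint, LinearMap.adjoint_inner_right]
  -- ψ is a unit vector
  have hψ : ‖ψ‖ = 1 := by
    have h1 : (inner ℂ ψ ψ : ℂ) = inner ℂ φ φ := by
      rw [hψdef, hadj]
      congr 1
      simp only [Matrix.toEuclideanLin_apply, Matrix.mulVec_mulVec]
      have : Wᴴ * W = 1 := by
        have := hW.1
        rwa [Matrix.star_eq_conjTranspose] at this
      simp [this]
    have h2' : (‖ψ‖ : ℝ) ^ 2 = ‖φ‖ ^ 2 := by
      rw [← inner_self_eq_norm_sq (𝕜 := ℂ), ← inner_self_eq_norm_sq (𝕜 := ℂ), h1]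
    nlinarith [norm_nonneg ψ, norm_nonneg φ]
  -- self-adjointness of S
  have hSself : ∀ x y : EuclideanSpace ℂ (Fin n),
      (inner ℂ (Matrix.toEuclideanLin S x) y : ℂ) = inner ℂ x (Matrix.toEuclideanLin S y) := by
    intro x y
    rw [hadj, hSherm.eq]
  -- norm of S φhat is at most 1
  have hSφhat : ‖Matrix.toEuclideanLin S φhat‖ ≤ 1 := by
    have h1 : (inner ℂ (Matrix.toEuclideanLin S φhat) (Matrix.toEuclideanLin S φhat) : ℂ) =
        inner ℂ φhat (Matrix.toEuclideanLin X φhat) := by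
      rw [hSself]
      congr 1
      simp only [Matrix.toEuclideanLin_apply, Equiv.apply_symm_apply, Matrix.mulVec_mulVec]
      rw [psd_sqrt_mul_self hX]
    have h2 : 0 ≤ Complex.re (inner ℂ φhat (Matrix.toEuclideanLin (1 - X) φhat) : ℂ) := by
      rw [EuclideanSpace.inner_eq_star_dotProduct, dotProduct_comm]
      simpa only [Matrix.toEuclideanLin_apply, Equiv.apply_symm_apply, WithLp.equiv_apply,
        RCLike.re_to_complex] using
        hXle.re_dotProduct_nonneg (WithLp.equiv _ _ φhat)
    have h3 : Complex.re (inner ℂ φhat (Matrix.toEuclideanLin (1 - X) φhat) : ℂ) =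
        Complex.re (inner ℂ φhat φhat : ℂ) -
          Complex.re (inner ℂ φhat (Matrix.toEuclideanLin X φhat) : ℂ) := by
      simp [map_sub, inner_sub_right, Matrix.toEuclideanLin_apply]
    have h4 : Complex.re (inner ℂ φhat φhat : ℂ) = 1 := by
      rw [inner_self_eq_norm_sq_to_K (𝕜 := ℂ), hφhat]; norm_num
    have h5 : ‖Matrix.toEuclideanLin S φhat‖ ^ 2 ≤ 1 := by
      have hre : RCLike.re (inner ℂ (Matrix.toEuclideanLin S φhat)
            (Matrix.toEuclideanLin S φhat) : ℂ) =
          RCLike.re (inner ℂ φhat (Matrix.toEuclideanLin X φhat) : ℂ) := by rw [h1]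
      rw [inner_self_eq_norm_sq (𝕜 := ℂ)] at hre
      simp only [RCLike.re_to_complex] at hre
      rw [hre]
      linarith
    nlinarith [norm_nonneg (Matrix.toEuclideanLin S φhat)]
  -- main bound: ‖ψ - S φhat‖ ≤ √(2ε)
  have hmain : ‖ψ - Matrix.toEuclideanLin S φhat‖ ≤ Real.sqrt (2 * ε) := by
    have hre : Complex.re (inner ℂ ψ (Matrix.toEuclideanLin S φhat) : ℂ) ≥ 1 - ε := by
      have : (inner ℂ ψ (Matrix.toEuclideanLin S φhat) : ℂ) =
          (starRingEnd ℂ) (inner ℂ φhat (Matrix.toEuclideanLin S ψ) : ℂ) := by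
        rw [← inner_conj_symm, hSself]
      rw [this, Complex.conj_re]
      exact hoverlap
    have hsq : ‖ψ - Matrix.toEuclideanLin S φhat‖ ^ 2 ≤ 2 * ε := by
      have := norm_sub_sq (𝕜 := ℂ) ψ (Matrix.toEuclideanLin S φhat)
      simp only [RCLike.re_to_complex] at this
      rw [this, hψ]
      nlinarith [hSφhat, norm_nonneg (Matrix.toEuclideanLin S φhat)]
    have := Real.sqrt_le_sqrt hsq
    rwa [Real.sqrt_sq (norm_nonneg _)] at this
  calc ‖ψ - φhat‖ ≤ ‖ψ - Matrix.toEuclideanLin S φhat‖ +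
        ‖Matrix.toEuclideanLin S φhat - φhat‖ := norm_sub_le_norm_sub_add_norm_sub _ _ _
    _ ≤ Real.sqrt (2 * ε) + δ := by
        have : ‖Matrix.toEuclideanLin S φhat - φhat‖ = ‖φhat - Matrix.toEuclideanLin S φhat‖ :=
          norm_sub_rev _ _
        rw [this]
        exact add_le_add hmain hgentle
end

section
/- The relative entropy of coherence C_r(ρ) = min over incoherent σ of S(ρ‖σ) equals S(Δ(ρ)) − S(ρ), where Δ is the dephasing map in the incoherent basis and S is the von Neumann entropy. -/
open Matrix
open scoped ComplexOrder

variable {d : ℕ}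

/-- Von Neumann entropy (in nats) of a Hermitian matrix, via its spectrum. -/
noncomputable def vnEntropy {ρ : Matrix (Fin d) (Fin d) ℂ} (hρ : ρ.IsHermitian) : ℝ :=
  -∑ i, hρ.eigenvalues i * Real.log (hρ.eigenvalues i)

/-- Quantum relative entropy `S(ρ‖σ)` of a state `ρ` with respect to the
incoherent (diagonal) state `σ = diag(q)`:
`S(ρ‖σ) = Tr ρ log ρ − Tr ρ log σ` if `supp ρ ⊆ supp σ`, and `+∞` otherwise.
For `σ` diagonal and `ρ ≥ 0`, the support condition reads `qᵢ = 0 → ρᵢᵢ = 0`. -/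
noncomputable def relEntToDiag (ρ : Matrix (Fin d) (Fin d) ℂ) (hρ : ρ.IsHermitian)
    (q : Fin d → ℝ) : EReal :=
  if ∀ i, q i = 0 → ρ i i = 0 then
    (((∑ i, hρ.eigenvalues i * Real.log (hρ.eigenvalues i))
      - ∑ i, (ρ i i).re * Real.log (q i) : ℝ) : EReal)
  else ⊤

/-- Diagonal entries of a positive semidefinite matrix are nonnegative. -/
lemma diag_nonneg' {ρ : Matrix (Fin d) (Fin d) ℂ} (hρ : ρ.PosSemidef) (i : Fin d) :
    0 ≤ ρ i i := by
  have := hρ.dotProduct_mulVec_nonneg (Pi.single i 1)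
  simpa [Matrix.mulVec_single, dotProduct, Pi.single_apply, apply_ite,
    Finset.sum_ite_eq'] using this

/-- Gibbs' inequality. -/
lemma gibbs {p q : Fin d → ℝ} (hp0 : ∀ i, 0 ≤ p i) (hq0 : ∀ i, 0 ≤ q i)
    (hp1 : ∑ i, p i = 1) (hq1 : ∑ i, q i = 1) (hsupp : ∀ i, q i = 0 → p i = 0) :
    ∑ i, p i * Real.log (q i) ≤ ∑ i, p i * Real.log (p i) := by
  have key : ∑ i, (p i * Real.log (q i) - p i * Real.log (p i)) ≤ ∑ i, (q i - p i) := by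
    apply Finset.sum_le_sum
    intro i _
    rcases eq_or_lt_of_le (hp0 i) with h | h
    · simp [← h, hq0 i]
    · have hq : 0 < q i := lt_of_le_of_ne (hq0 i) fun h' => by
        have := hsupp i h'.symm; linarith
      have : Real.log (q i) - Real.log (p i) = Real.log (q i / p i) := by
        rw [Real.log_div hq.ne' h.ne']
      calc p i * Real.log (q i) - p i * Real.log (p i)
          = p i * Real.log (q i / p i) := by rw [← this]; ring
        _ ≤ p i * (q i / p i - 1) := by
            apply mul_le_mul_of_nonneg_left _ h.le
            exact Real.log_le_sub_one_of_pos (div_pos hq h)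
        _ = q i - p i := by field_simp
  rw [Finset.sum_sub_distrib, Finset.sum_sub_distrib, hp1, hq1] at key
  linarith

/-- The relative entropy of coherence `C_r(ρ) = min_{σ incoherent} S(ρ‖σ)`
equals `S(Δ(ρ)) − S(ρ)`. -/
theorem relative_entropy_of_coherence
    (ρ : Matrix (Fin d) (Fin d) ℂ) (hρ : ρ.PosSemidef) (htr : ρ.trace = 1) :
    sInf { r : EReal | ∃ q : Fin d → ℝ,
        (∀ i, 0 ≤ q i) ∧ (∑ i, q i) = 1 ∧ r = relEntToDiag ρ hρ.1 q }
      = (((-∑ i, (ρ i i).re * Real.log ((ρ i i).re)) - vnEntropy hρ.1 : ℝ) : EReal) := by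
  set p : Fin d → ℝ := fun i => (ρ i i).re with hp
  have hdiag : ∀ i, ρ i i = (p i : ℂ) := by
    intro i
    have h := diag_nonneg' hρ i
    rw [Complex.le_def] at h
    exact Complex.ext rfl (by simp [h.2.symm])
  have hp0 : ∀ i, 0 ≤ p i := by
    intro i
    have h := diag_nonneg' hρ i
    rw [Complex.le_def] at h
    simpa using h.1
  have hp1 : ∑ i, p i = 1 := by
    have : (ρ.trace).re = 1 := by rw [htr]; simp
    rw [Matrix.trace] at this
    simpa [Matrix.diag, Complex.re_sum] using this
  apply le_antisymm
  · apply sInf_le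
    refine ⟨p, hp0, hp1, ?_⟩
    rw [relEntToDiag, if_pos]
    · rw [show ((((-∑ i, (ρ i i).re * Real.log ((ρ i i).re)) - vnEntropy hρ.1 : ℝ)) : EReal)
          = ((((∑ i, hρ.1.eigenvalues i * Real.log (hρ.1.eigenvalues i))
            - ∑ i, (ρ i i).re * Real.log (p i) : ℝ)) : EReal) from by
        congr 1
        rw [vnEntropy]; ring]
    · intro i hi
      rw [hdiag i, hi]; simp
  · apply le_sInf
    rintro r ⟨q, hq0, hq1, rfl⟩
    rw [relEntToDiag]
    split_ifs with h
    · rw [EReal.coe_le_coe_iff, vnEntropy]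
      have := gibbs hp0 hq0 hp1 hq1 (fun i hi => by rw [hp]; simp [h i hi])
      linarith
    · exact le_top
end
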